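/- arXiv:0809.4340 — 2 statements merged into one kernel-verified Lean document; each statement's English description precedes it below -/
import Mathlib

section
/- Let m ∈ ℂ satisfy m ≠ 0, m³ ≠ 1, m³ ≠ −8, and (4 − m³)³ ≠ 27m⁶. Set J(m) := 27·(m(m³+8)/(m³−1))³ and μ := (4 − m³)/(3m²). Then J(μ) = −(1/27)·(J(m) − 2⁸·3³)³ / J(m)², i.e. J(μ) = −(1/27)·(J(m) − 6912)³ / J(m)². -/
/-- The `j`-invariant of the Hesse cubic with parameter `m`. -/
noncomputable def Jinv (m : ℂ) : ℂ := 27 * (m * (m ^ 3 + 8) / (m ^ 3 - 1)) ^ 3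

/-! The `j`-invariant of `C_m` depends only on `t = m³`: `J = 27 t (t + 8)³ / (t - 1)³`, and the
hessian parameter satisfies `μ³ = (4 - t)³ / (27 t²)`. So the theorem is an identity of rational
functions in `t`. Its denominators do not vanish because `(4 - t)³ - 27 t² = -(t - 1)(t + 8)²`,
and `J - 6912 = 27 (4 - t)((4 - t)³ + 216 t²) / (t - 1)³` is, up to the factor, the numerator of
`J(μ)`. -/

section HesseCubeParameter

variable {K : Type*} [Field K]

def hesseJ (t : K) : K := 27 * t * (t + 8) ^ 3 / (t - 1) ^ 3

def hessianCube (t : K) : K := (4 - t) ^ 3 / (27 * t ^ 2)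

theorem twentySeven_ne_zero (h3 : (3 : K) ≠ 0) : (27 : K) ≠ 0 := by
  simpa [show (27 : K) = 3 ^ 3 by norm_num] using pow_ne_zero 3 h3

theorem four_sub_pow_three_sub (t : K) :
    (4 - t) ^ 3 - 27 * t ^ 2 = -((t - 1) * (t + 8) ^ 2) := by
  ring

theorem hessianCube_sub_one {t : K} (h3 : (3 : K) ≠ 0) (ht0 : t ≠ 0) :
    hessianCube t - 1 = -((t - 1) * (t + 8) ^ 2) / (27 * t ^ 2) := by
  rw [hessianCube, div_sub_one (mul_ne_zero (twentySeven_ne_zero h3) (pow_ne_zero 2 ht0)),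
    four_sub_pow_three_sub]

theorem hesseJ_sub_6912 {t : K} (ht1 : t ≠ 1) :
    hesseJ t - 6912 = 27 * ((4 - t) * ((4 - t) ^ 3 + 216 * t ^ 2)) / (t - 1) ^ 3 := by
  have : t - 1 ≠ 0 := sub_ne_zero.mpr ht1
  rw [hesseJ, div_sub' (pow_ne_zero 3 this)]
  ring

theorem hesseJ_hessianCube {t : K} (h3 : (3 : K) ≠ 0) (ht0 : t ≠ 0) (ht1 : t ≠ 1)
    (ht8 : t ≠ -8) :
    hesseJ (hessianCube t) = -(1 / 27) * (hesseJ t - 6912) ^ 3 / hesseJ t ^ 2 := by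
  have h27 := twentySeven_ne_zero h3
  have ht1' : t - 1 ≠ 0 := sub_ne_zero.mpr ht1
  have ht8' : t + 8 ≠ 0 := by rwa [← sub_neg_eq_add, sub_ne_zero]
  rw [hesseJ_sub_6912 ht1, hesseJ, hessianCube_sub_one h3 ht0, hesseJ, hessianCube]
  field_simp
  ring

end HesseCubeParameter

theorem Jinv_eq_hesseJ (m : ℂ) : Jinv m = hesseJ (m ^ 3) := by
  rw [Jinv, hesseJ, div_pow, mul_pow]
  ring

theorem hesse_param_pow_three (m : ℂ) : ((4 - m ^ 3) / (3 * m ^ 2)) ^ 3 = hessianCube (m ^ 3) := by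
  rw [hessianCube, div_pow]
  ring

theorem hessian_dynamical_system_in_j_general (m : ℂ) (hm0 : m ≠ 0) (hm1 : m ^ 3 ≠ 1)
    (hm8 : m ^ 3 ≠ -8) :
    Jinv ((4 - m ^ 3) / (3 * m ^ 2)) =
      -(1 / 27) * (Jinv m - 6912) ^ 3 / (Jinv m) ^ 2 := by
  rw [Jinv_eq_hesseJ, Jinv_eq_hesseJ, hesse_param_pow_three]
  exact hesseJ_hessianCube three_ne_zero (pow_ne_zero 3 hm0) hm1 hm8

theorem hessian_dynamical_system_in_j (m : ℂ) (hm0 : m ≠ 0) (hm1 : m ^ 3 ≠ 1)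
    (hm8 : m ^ 3 ≠ -8) (hmu : (4 - m ^ 3) ^ 3 ≠ 27 * m ^ 6) :
    Jinv ((4 - m ^ 3) / (3 * m ^ 2)) =
      -(1 / 27) * (Jinv m - 6912) ^ 3 / (Jinv m) ^ 2 :=
  hessian_dynamical_system_in_j_general m hm0 hm1 hm8
end

section
/- The Weierstrass curve over ℂ with coefficients a₁ = a₂ = a₃ = 0, a₄ = −1/16, a₆ = −1/192 (the curve E_{1/4,1/48}, with equation v² = 4u³ − (1/4)u − 1/48 after rescaling) has j-invariant 6912; moreover for every m ∈ ℂ with m³ = 4 one has 27·(m(m³+8)/(m³−1))³ = 6912. Consequently J(C_{∛4}) = j(E_{1/4,1/48}) = 6912, where J(m) := 27·(m(m³+8)/(m³−1))³. -/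
/-- The Weierstrass curve `E_{1/4,1/48}`, i.e. `y² = x³ − (1/16)x − 1/192`, which is
`v² = 4u³ − (1/4)u − 1/48` after rescaling. -/
noncomputable def Especial : WeierstrassCurve ℂ :=
  { a₁ := 0, a₂ := 0, a₃ := 0, a₄ := -1 / 16, a₆ := -1 / 192 }

theorem WeierstrassCurve.c₄_pow_three_div_Δ_of_isShortNF {F : Type*} [Field F]
    (W : WeierstrassCurve F) [W.IsShortNF] :
    W.c₄ ^ 3 / W.Δ = 6912 * W.a₄ ^ 3 / (4 * W.a₄ ^ 3 + 27 * W.a₆ ^ 2) := by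
  have hc₄ : W.c₄ ^ 3 = -16 * (6912 * W.a₄ ^ 3) := by rw [W.c₄_of_isShortNF]; ring
  rw [hc₄, W.Δ_of_isShortNF]
  rcases eq_or_ne (16 : F) 0 with h16 | h16
  · have h6912 : (6912 : F) = 432 * 16 := by norm_num
    simp [h6912, h16]
  · exact mul_div_mul_left _ _ (neg_ne_zero.mpr h16)

instance : Especial.IsShortNF := ⟨rfl, rfl, rfl⟩

theorem hesse_j_eq_of_pow_three_eq {K : Type*} [Field K] {m c : K} (hm : m ^ 3 = c) :
    27 * (m * (m ^ 3 + 8) / (m ^ 3 - 1)) ^ 3 = 27 * c * (c + 8) ^ 3 / (c - 1) ^ 3 := by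
  rw [div_pow, mul_pow, hm]
  ring

theorem j_of_special_curve_and_hesse_parameter :
    Especial.c₄ ^ 3 / Especial.Δ = 6912 ∧
      ∀ m : ℂ, m ^ 3 = 4 → 27 * (m * (m ^ 3 + 8) / (m ^ 3 - 1)) ^ 3 = 6912 := by
  refine ⟨?_, fun m hm => ?_⟩
  · rw [Especial.c₄_pow_three_div_Δ_of_isShortNF]
    norm_num [Especial]
  · rw [hesse_j_eq_of_pow_three_eq hm]
    norm_num
end
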